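/- Let n ≥ 1, let μ = (μ_1,…,μ_n) ∈ ℂⁿ satisfy μ_1 + ⋯ + μ_n = 0, let ε ∈ {+1,−1}ⁿ, and let 0 ≤ p ≤ n. Set 𝔍 = max_l |Im μ_l|. Then |e_p(ε_1·e^{−2πiμ_1}, …, ε_n·e^{−2πiμ_n})| ≤ C(n,p) · exp(2π · min(p, n−p) · 𝔍), where e_p denotes the elementary symmetric polynomial of degree p in n variables and C(n,p) is the binomial coefficient n choose p. -/

import Mathlib

/-! The modulus of `ε_l e^{-2πiμ_l}` is `e^{2π Im μ_l}`, so each of the `C(n,p)` monomials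
of `e_p` has modulus `e^{2π S}`, where `S` is the sum of `Im μ_l` over the `p` chosen indices.
Trivially `S ≤ p𝔍`; since the `Im μ_l` sum to zero, `S` is also minus the sum over the `n - p`
remaining indices, so `S ≤ (n - p)𝔍`. -/

open Finset

theorem sum_le_card_mul_of_abs_le {ι : Type*} (s : Finset ι) {f : ι → ℝ} {J : ℝ}
    (hf : ∀ i, |f i| ≤ J) : ∑ i ∈ s, f i ≤ #s * J := by
  simpa using s.sum_le_card_nsmul f J fun i _ => (le_abs_self _).trans (hf i)

theorem sum_le_min_card_mul_of_sum_eq_zero {ι : Type*} [Fintype ι] [DecidableEq ι]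
    {f : ι → ℝ} {J : ℝ} (hsum : ∑ i, f i = 0) (hf : ∀ i, |f i| ≤ J) (s : Finset ι) :
    ∑ i ∈ s, f i ≤ ((min #s (Fintype.card ι - #s) : ℕ) : ℝ) * J := by
  have hs : ∑ i ∈ s, f i ≤ #s * J := sum_le_card_mul_of_abs_le s hf
  have hsc : ∑ i ∈ s, f i ≤ #sᶜ * J := by
    have hneg := sum_le_card_mul_of_abs_le sᶜ (f := fun i => -f i) fun i =>
      (abs_neg (f i)).le.trans (hf i)
    have := sum_add_sum_compl s f
    simp only [sum_neg_distrib] at hneg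
    linarith
  rw [card_compl] at hsc
  rcases min_cases #s (Fintype.card ι - #s) with ⟨h, _⟩ | ⟨h, _⟩ <;> rw [h] <;> assumption

theorem Complex.norm_exp_neg_two_pi_I_mul (z : ℂ) :
    ‖Complex.exp (-(2 * Real.pi * Complex.I * z))‖ = Real.exp (2 * Real.pi * z.im) := by
  simp [Complex.norm_exp]

theorem norm_prod_mul_exp_neg_two_pi_I_mul {ι : Type*} (s : Finset ι) {ε μ : ι → ℂ}
    (hε : ∀ i, ‖ε i‖ = 1) :
    ‖∏ i ∈ s, ε i * Complex.exp (-(2 * Real.pi * Complex.I * μ i))‖ =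
      Real.exp (2 * Real.pi * ∑ i ∈ s, (μ i).im) := by
  simp only [norm_prod, norm_mul, hε, one_mul, Complex.norm_exp_neg_two_pi_I_mul, mul_sum,
    Real.exp_sum]

theorem stmt_14 (n : ℕ) (hn : 1 ≤ n) (μ : Fin n → ℂ) (hsum : ∑ l, μ l = 0)
    (ε : Fin n → ℂ) (hε : ∀ l, ε l = 1 ∨ ε l = -1) (p : ℕ) :
    ‖∑ t ∈ Finset.powersetCard p (Finset.univ : Finset (Fin n)),
        ∏ l ∈ t, ε l * Complex.exp (-(2 * Real.pi * Complex.I * μ l))‖ ≤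
      (n.choose p : ℝ) * Real.exp (2 * Real.pi * ((min p (n - p) : ℕ) : ℝ) *
        Finset.univ.sup' (Finset.univ_nonempty_iff.mpr ⟨⟨0, hn⟩⟩) fun l => |(μ l).im|) := by
  set J := Finset.univ.sup' (Finset.univ_nonempty_iff.mpr ⟨⟨0, hn⟩⟩) fun l => |(μ l).im|
  have hJ : ∀ l, |(μ l).im| ≤ J := fun l => le_sup' (fun l => |(μ l).im|) (mem_univ l)
  have hsum_im : ∑ l, (μ l).im = 0 := by simpa using congrArg Complex.im hsum
  have hε_norm : ∀ l, ‖ε l‖ = 1 := fun l => by rcases hε l with h | h <;> simp [h]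
  have hterm : ∀ t ∈ powersetCard p (univ : Finset (Fin n)),
      ‖∏ l ∈ t, ε l * Complex.exp (-(2 * Real.pi * Complex.I * μ l))‖ ≤
        Real.exp (2 * Real.pi * ((min p (n - p) : ℕ) : ℝ) * J) := by
    intro t ht
    obtain rfl := mem_powersetCard_univ.mp ht
    rw [norm_prod_mul_exp_neg_two_pi_I_mul t hε_norm, Real.exp_le_exp,
      mul_assoc (2 * Real.pi)]
    have hS := sum_le_min_card_mul_of_sum_eq_zero hsum_im hJ t
    rw [Fintype.card_fin] at hS
    exact mul_le_mul_of_nonneg_left hS Real.two_pi_pos.le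
  calc _ ≤ ∑ t ∈ powersetCard p (univ : Finset (Fin n)),
          ‖∏ l ∈ t, ε l * Complex.exp (-(2 * Real.pi * Complex.I * μ l))‖ :=
        norm_sum_le _ _
    _ ≤ _ := by simpa using sum_le_card_nsmul _ _ _ hterm
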